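/- arXiv:2112.13604 — 5 statements merged into one kernel-verified Lean document; each statement's English description precedes it below -/
import Mathlib

section
/- Let k₀ be a field of characteristic p > 0, k = k₀(t) the field of rational functions in one variable t over k₀, a, b ∈ k₀ nonzero, and m, n ≥ 1 integers with p^m > 2. If x, y ∈ k satisfy x = a·t·x^{p^m} + b·y^{p^n}, then x = 0 and y = 0. -/
/-!
Differentiate with respect to `t`. In characteristic `p` every `p`-th power has zero derivative,
so the equation forces `x' = a x^q` with `q = p^m ≥ 3`. Writing `x = f/g` in lowest terms with `g`
monic, this reads `(f' g - f g') g^(q-2) = a f^q`, so `g ∣ a f^q` and hence `g = 1`. Then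
`f' = a f^q` is impossible for `f ≠ 0` by comparing degrees, and `x = 0` gives `b y^(p^n) = 0`.
-/

open Polynomial

namespace Polynomial

variable {R : Type*} [CommRing R]

theorem derivative_pow_eq_zero_of_natCast_eq_zero {q : ℕ} (hq : (q : R) = 0) (f : R[X]) :
    derivative (f ^ q) = 0 := by
  simp [derivative_pow, hq]

theorem eq_zero_of_derivative_eq_C_mul_pow [IsDomain R] {a : R} (ha : a ≠ 0) {q : ℕ}
    (hq : q ≠ 0) {f : R[X]} (h : derivative f = C a * f ^ q) : f = 0 := by
  by_contra hf
  have hdf : derivative f ≠ 0 := by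
    rw [h]; exact mul_ne_zero (C_ne_zero.mpr ha) (pow_ne_zero _ hf)
  have hdeg : f.natDegree ≠ 0 := fun h0 ↦ hdf (by rw [eq_C_of_natDegree_eq_zero h0, derivative_C])
  have hlt := natDegree_derivative_lt hdeg
  rw [h, natDegree_C_mul ha, natDegree_pow] at hlt
  exact hlt.not_ge (Nat.le_mul_of_pos_left _ (Nat.pos_of_ne_zero hq))

end Polynomial

namespace RatFunc

variable {K : Type*} [Field K]

theorem num_mul_denom_pow_eq_of_eq {x y : RatFunc K} {a b : K} {q r : ℕ} (hq : q ≠ 0)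
    (h : x = C a * X * x ^ q + C b * y ^ r) :
    x.num * x.denom ^ (q - 1) * y.denom ^ r =
      Polynomial.C a * Polynomial.X * x.num ^ q * y.denom ^ r +
        Polynomial.C b * y.num ^ r * x.denom ^ q := by
  apply algebraMap_injective K
  have hg := algebraMap_ne_zero (denom_ne_zero x)
  have hw := algebraMap_ne_zero (denom_ne_zero y)
  obtain ⟨q, rfl⟩ := Nat.exists_eq_add_one_of_ne_zero hq
  simp only [map_add, map_mul, map_pow, algebraMap_C, algebraMap_X, Nat.add_sub_cancel]
  rw [(div_eq_iff hg).mp (num_div_denom x), (div_eq_iff hw).mp (num_div_denom y)]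
  linear_combination (algebraMap K[X] K⟮X⟯ x.denom ^ (q + 1) * algebraMap K[X] K⟮X⟯ y.denom ^ r) * h

theorem derivative_num_mul_denom_pow_eq_of_eq {x y : RatFunc K} {a b : K} {q r : ℕ}
    (hq1 : q ≠ 0) (hq : (q : K) = 0) (hr : (r : K) = 0)
    (h : x = C a * X * x ^ q + C b * y ^ r) :
    derivative (x.num * x.denom ^ (q - 1)) = Polynomial.C a * x.num ^ q := by
  have hD := congrArg derivative (num_mul_denom_pow_eq_of_eq hq1 h)
  simp only [derivative_add, derivative_mul, derivative_pow_eq_zero_of_natCast_eq_zero hq,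
    derivative_pow_eq_zero_of_natCast_eq_zero hr, derivative_C, derivative_X] at hD ⊢
  apply mul_right_cancel₀ (pow_ne_zero r (denom_ne_zero y))
  linear_combination hD

/-- When `(q : K) = 0` the hypothesis is `x' = a x ^ q` multiplied by `x.denom ^ q`. The bound
`3 ≤ q` is sharp: `x = -1 / (a X)` solves `x' = a x ^ 2`. -/
theorem eq_zero_of_derivative_num_mul_denom_pow_eq {x : RatFunc K} {a : K} (ha : a ≠ 0)
    {q : ℕ} (hq : 3 ≤ q)
    (h : derivative (x.num * x.denom ^ (q - 1)) = Polynomial.C a * x.num ^ q) : x = 0 := by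
  have hdvd : x.denom ∣ Polynomial.C a * x.num ^ q := by
    rw [← h]
    refine (dvd_pow_self _ (by omega : q - 1 - 1 ≠ 0)).trans ?_
    exact pow_sub_one_dvd_derivative_of_pow_dvd (dvd_mul_left _ _)
  have hunit : IsUnit x.denom :=
    isUnit_of_dvd_unit (((isCoprime_num_denom x).symm.pow_right).dvd_of_dvd_mul_right hdvd)
      (isUnit_C.mpr ha.isUnit)
  have hg : x.denom = 1 := (monic_denom x).eq_one_of_isUnit hunit
  rw [hg, one_pow, mul_one] at h
  exact num_eq_zero_iff.mp (eq_zero_of_derivative_eq_C_mul_pow ha (by omega) h)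

end RatFunc

theorem unipotent_curve_trivial_rational_points_general
    (p : ℕ) (k₀ : Type) [Field k₀] [CharP k₀ p]
    (a b : k₀) (ha : a ≠ 0) (hb : b ≠ 0)
    (m n : ℕ) (hn : 1 ≤ n) (hpm : 2 < p ^ m)
    (x y : RatFunc k₀)
    (heq : x = RatFunc.C a * RatFunc.X * x ^ p ^ m + RatFunc.C b * y ^ p ^ n) :
    x = 0 ∧ y = 0 := by
  have hm : m ≠ 0 := by rintro rfl; simp at hpm
  have hq : ((p ^ m : ℕ) : k₀) = 0 := (CharP.cast_eq_zero_iff k₀ p _).2 (dvd_pow_self p hm)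
  have hr : ((p ^ n : ℕ) : k₀) = 0 := (CharP.cast_eq_zero_iff k₀ p _).2 (dvd_pow_self p (by omega))
  have hx : x = 0 := RatFunc.eq_zero_of_derivative_num_mul_denom_pow_eq ha hpm
    (RatFunc.derivative_num_mul_denom_pow_eq_of_eq (by omega) hq hr heq)
  refine ⟨hx, ?_⟩
  rw [hx, zero_pow (by omega), mul_zero, zero_add, eq_comm] at heq
  exact eq_zero_of_pow_eq_zero ((mul_eq_zero.mp heq).resolve_left (by simpa using hb))

/-- **Rosenlicht/Tits-type example.**
Let `k₀` be a field of characteristic `p > 0`, `k = k₀(t)` the field of rational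
functions, `a b ∈ k₀` nonzero, and `m n ≥ 1` integers with `p ^ m > 2`.
If `x y ∈ k` satisfy `x = a * t * x ^ p ^ m + b * y ^ p ^ n`, then `x = 0` and `y = 0`. -/
theorem unipotent_curve_trivial_rational_points
    (p : ℕ) (k₀ : Type) [Field k₀] [CharP k₀ p] (hp : 0 < p)
    (a b : k₀) (ha : a ≠ 0) (hb : b ≠ 0)
    (m n : ℕ) (hm : 1 ≤ m) (hn : 1 ≤ n) (hpm : 2 < p ^ m)
    (x y : RatFunc k₀)
    (heq : x = RatFunc.C a * RatFunc.X * x ^ p ^ m + RatFunc.C b * y ^ p ^ n) :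
    x = 0 ∧ y = 0 :=
  unipotent_curve_trivial_rational_points_general p k₀ a b ha hb m n hn hpm x y heq
end

section
/- Let k₀ be a field of characteristic p > 0, k = k₀(t), a ∈ k₀ nonzero, and m ≥ 1 an integer with p^m > 2. If x ∈ k satisfies dx/dt = a·x^{p^m} (derivative with respect to t), then x = 0. -/
/-!
Write `x = f / g` in lowest terms with `g` monic and put `q = p ^ m`. The quotient rule turns
`x' = a x ^ q` into the polynomial identity `a f ^ q = (f' g - f g') g ^ (q - 2)`; since `q > 2`,
`g` divides `a f ^ q`, and coprimality forces `g = 1`. So `x` is a polynomial with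
`x' = a x ^ q`, and comparing degrees leaves only `x = 0`.
-/

open Polynomial

theorem Polynomial.eq_zero_of_derivative_eq_C_mul_pow_s5 {R : Type*} [CommRing R] [IsDomain R]
    {f : R[X]} {a : R} {q : ℕ} (ha : a ≠ 0) (hq : q ≠ 0) (h : derivative f = C a * f ^ q) :
    f = 0 := by
  by_contra hf
  have h_deg : f.natDegree ≠ 0 := by
    intro h_deg
    have h_const : derivative f = 0 := by rw [eq_C_of_natDegree_eq_zero h_deg, derivative_C]
    rw [h_const, eq_comm, mul_eq_zero, C_eq_zero, pow_eq_zero_iff hq] at h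
    exact h.elim ha hf
  have h_lt := natDegree_derivative_lt h_deg
  rw [h, natDegree_C_mul ha, natDegree_pow] at h_lt
  exact h_lt.not_ge (Nat.le_mul_of_pos_left _ (Nat.pos_of_ne_zero hq))

namespace RatFunc

variable {K : Type*} [Field K] {D : Derivation K (RatFunc K) (RatFunc K)}

theorem derivation_algebraMap_of_map_X (hD : D RatFunc.X = 1) (f : K[X]) :
    D (algebraMap K[X] (RatFunc K) f) = algebraMap K[X] (RatFunc K) (derivative f) := by
  rw [← aeval_X_left_eq_algebraMap, ← aeval_X_left_eq_algebraMap, Derivation.comp_aeval_eq, hD,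
    smul_eq_mul, mul_one]

theorem algebraMap_num_eq_mul_denom (x : RatFunc K) :
    algebraMap K[X] (RatFunc K) x.num = x * algebraMap K[X] (RatFunc K) x.denom :=
  (div_eq_iff (algebraMap_ne_zero (denom_ne_zero x))).mp (num_div_denom x)

theorem derivation_mul_denom_sq (hD : D RatFunc.X = 1) (x : RatFunc K) :
    D x * algebraMap K[X] (RatFunc K) (x.denom ^ 2) =
      algebraMap K[X] (RatFunc K) (derivative x.num * x.denom - x.num * derivative x.denom) := by
  have h_leibniz := congrArg D (algebraMap_num_eq_mul_denom x)
  rw [Derivation.leibniz, smul_eq_mul, smul_eq_mul, derivation_algebraMap_of_map_X hD,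
    derivation_algebraMap_of_map_X hD] at h_leibniz
  simp only [map_sub, map_mul, map_pow]
  rw [h_leibniz, algebraMap_num_eq_mul_denom x]
  ring

theorem C_mul_num_pow_eq_of_derivation_eq (hD : D RatFunc.X = 1) {x : RatFunc K} {a : K}
    {q : ℕ} (hq : 2 ≤ q) (h : D x = C a * x ^ q) :
    Polynomial.C a * x.num ^ q =
      (derivative x.num * x.denom - x.num * derivative x.denom) * x.denom ^ (q - 2) := by
  obtain ⟨n, rfl⟩ : ∃ n, q = n + 2 := ⟨q - 2, by omega⟩
  apply algebraMap_injective K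
  rw [map_mul _ _ (x.denom ^ _), ← derivation_mul_denom_sq hD, h, Nat.add_sub_cancel]
  simp only [map_mul, map_pow, algebraMap_C, algebraMap_num_eq_mul_denom x]
  ring

theorem denom_eq_one_of_denom_dvd_C_mul_num_pow {x : RatFunc K} {a : K} {n : ℕ} (ha : a ≠ 0)
    (h : x.denom ∣ Polynomial.C a * x.num ^ n) :
    x.denom = 1 := by
  have h_dvd_C : x.denom ∣ Polynomial.C a :=
    (isCoprime_num_denom x).symm.pow_right.dvd_of_dvd_mul_right h
  exact (monic_denom x).isUnit_iff.mp (isUnit_of_dvd_unit h_dvd_C (isUnit_C.mpr ha.isUnit))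

end RatFunc

theorem derivative_eq_const_mul_pow_char_imp_zero_general
    (p : ℕ) (k₀ : Type) [Field k₀]
    (a : k₀) (ha : a ≠ 0) (m : ℕ) (hpm : 2 < p ^ m)
    (D : Derivation k₀ (RatFunc k₀) (RatFunc k₀)) (hD : D RatFunc.X = 1)
    (x : RatFunc k₀) (heq : D x = RatFunc.C a * x ^ p ^ m) :
    x = 0 := by
  have h_denom : x.denom = 1 := by
    refine RatFunc.denom_eq_one_of_denom_dvd_C_mul_num_pow ha (n := p ^ m) ?_
    rw [RatFunc.C_mul_num_pow_eq_of_derivation_eq hD hpm.le heq]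
    exact dvd_mul_of_dvd_right (dvd_pow_self _ (by omega)) _
  have hx : x = algebraMap k₀[X] (RatFunc k₀) x.num := by
    rw [RatFunc.algebraMap_num_eq_mul_denom x, h_denom, map_one, mul_one]
  have h_num : derivative x.num = Polynomial.C a * x.num ^ p ^ m := by
    apply RatFunc.algebraMap_injective k₀
    rw [← RatFunc.derivation_algebraMap_of_map_X hD, ← hx, heq, map_mul, map_pow,
      RatFunc.algebraMap_C, ← hx]
  rw [hx, eq_zero_of_derivative_eq_C_mul_pow_s5 ha (by omega) h_num, map_zero]

/-- Let `k₀` be a field of characteristic `p > 0`, `k = k₀(t)`, `a ∈ k₀` nonzero and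
`m ≥ 1` with `p ^ m > 2`.  If `x ∈ k` satisfies `dx/dt = a * x ^ p ^ m`, where `d/dt`
is the unique derivation of `k₀(t)` over `k₀` with `dt/dt = 1`, then `x = 0`. -/
theorem derivative_eq_const_mul_pow_char_imp_zero
    (p : ℕ) (k₀ : Type) [Field k₀] [CharP k₀ p] (hp : 0 < p)
    (a : k₀) (ha : a ≠ 0) (m : ℕ) (hm : 1 ≤ m) (hpm : 2 < p ^ m)
    (D : Derivation k₀ (RatFunc k₀) (RatFunc k₀)) (hD : D RatFunc.X = 1)
    (x : RatFunc k₀) (heq : D x = RatFunc.C a * x ^ p ^ m) :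
    x = 0 :=
  derivative_eq_const_mul_pow_char_imp_zero_general p k₀ a ha m hpm D hD x heq
end

section
/- Let k₀ be a field of characteristic p > 0, k = k₀(t), a ∈ k₀ nonzero, and m ≥ 1 an integer with p^m > 2. If x ∈ k satisfies t·(dx/dt) = x − a·x^{p^m}, then x is a constant, i.e. x ∈ k₀. -/
/-!
Write `x = f / g` in lowest terms with `g` monic and put `n = p ^ m`. Clearing denominators in
`t x' = x - a xⁿ` gives `t (f'g - fg') gⁿ⁻² = f gⁿ⁻¹ - a fⁿ`, so `g` divides `a fⁿ`; as `g` is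
coprime to `f`, it is `1`. (This needs `n ≥ 3`: for `n = 2`, `t / (a t + c)` is a solution.)
Then `t f' = f - a fⁿ`, where the right side has degree `n deg f` and the left side degree at
most `deg f`, forcing `deg f = 0`.
-/

open Polynomial

namespace RatFunc

variable {K : Type*} [Field K]

theorem eq_algebraMap_num_of_denom_eq_one {x : RatFunc K} (h : x.denom = 1) :
    x = algebraMap K[X] (RatFunc K) x.num := by
  conv_lhs => rw [← num_div_denom x, h, map_one, div_one]

theorem derivation_algebraMap_eq_derivative {D : Derivation K (RatFunc K) (RatFunc K)}
    (hD : D X = 1) (f : K[X]) :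
    D (algebraMap K[X] (RatFunc K) f) = algebraMap K[X] (RatFunc K) (derivative f) := by
  simpa [hD] using D.map_aeval f X

theorem denom_dvd_C_mul_num_pow {D : Derivation K (RatFunc K) (RatFunc K)} (hD : D X = 1)
    {a : K} {n : ℕ} (hn : 3 ≤ n) {x : RatFunc K} (heq : X * D x = x - C a * x ^ n) :
    x.denom ∣ Polynomial.C a * x.num ^ n := by
  obtain ⟨r, rfl⟩ : ∃ r, n = r + 3 := ⟨n - 3, by omega⟩
  set φ := algebraMap K[X] (RatFunc K)
  set f := x.num
  set g := x.denom
  have hg : φ g ≠ 0 := algebraMap_ne_zero x.denom_ne_zero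
  have hf : φ f = x * φ g := by
    rw [← num_div_denom x]
    exact (div_mul_cancel₀ _ hg).symm
  have hf' : φ (derivative f) = x * φ (derivative g) + φ g * D x := by
    rw [← derivation_algebraMap_eq_derivative hD, ← derivation_algebraMap_eq_derivative hD, hf,
      Derivation.leibniz, smul_eq_mul, smul_eq_mul]
  have cleared : Polynomial.X * (derivative f * g - f * derivative g) * g ^ (r + 1)
      = f * g ^ (r + 2) - Polynomial.C a * f ^ (r + 3) := by
    apply algebraMap_injective K
    simp only [map_mul, map_sub, map_pow, algebraMap_X, algebraMap_C]
    rw [hf', hf]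
    linear_combination φ g ^ (r + 3) * heq
  exact ⟨f * g ^ (r + 1) - Polynomial.X * (derivative f * g - f * derivative g) * g ^ r,
    by linear_combination cleared⟩

end RatFunc

namespace Polynomial

variable {K : Type*} [Field K]

theorem natDegree_eq_zero_of_X_mul_derivative_eq {a : K} (ha : a ≠ 0) {n : ℕ} (hn : 2 ≤ n)
    {f : K[X]} (h : X * derivative f = f - C a * f ^ n) : f.natDegree = 0 := by
  by_contra hd
  have hpow : (C a * f ^ n).natDegree = n * f.natDegree := by
    rw [natDegree_C_mul ha, natDegree_pow]
  have hgrow : f.natDegree < n * f.natDegree := lt_mul_left (Nat.pos_of_ne_zero hd) (by omega)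
  have hrhs : (f - C a * f ^ n).natDegree = n * f.natDegree := by
    rw [natDegree_sub_eq_right_of_natDegree_lt (hpow ▸ hgrow), hpow]
  have hlhs : (X * derivative f).natDegree ≤ f.natDegree :=
    natDegree_mul_le.trans (by have := natDegree_derivative_le f; rw [natDegree_X]; omega)
  rw [h, hrhs] at hlhs
  exact hgrow.not_ge hlhs

end Polynomial

theorem t_mul_derivative_eq_imp_constant_general
    (p : ℕ) (k₀ : Type) [Field k₀]
    (a : k₀) (ha : a ≠ 0) (m : ℕ) (hpm : 2 < p ^ m)
    (D : Derivation k₀ (RatFunc k₀) (RatFunc k₀)) (hD : D RatFunc.X = 1)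
    (x : RatFunc k₀) (heq : RatFunc.X * D x = x - RatFunc.C a * x ^ p ^ m) :
    ∃ c : k₀, x = RatFunc.C c := by
  have hn : 3 ≤ p ^ m := hpm.nat_succ_le
  have hdenom : x.denom = 1 :=
    x.monic_denom.eq_one_of_isUnit <| isUnit_of_dvd_unit
      (x.isCoprime_num_denom.symm.pow_right.dvd_of_dvd_mul_right
        (RatFunc.denom_dvd_C_mul_num_pow hD hn heq))
      (isUnit_C.mpr ha.isUnit)
  obtain ⟨f, rfl⟩ : ∃ f : k₀[X], x = algebraMap k₀[X] (RatFunc k₀) f :=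
    ⟨_, RatFunc.eq_algebraMap_num_of_denom_eq_one hdenom⟩
  have hpoly : X * derivative f = f - C a * f ^ p ^ m := by
    apply RatFunc.algebraMap_injective k₀
    simpa only [map_mul, map_sub, map_pow, RatFunc.algebraMap_X, RatFunc.algebraMap_C,
      RatFunc.derivation_algebraMap_eq_derivative hD] using heq
  obtain ⟨c, rfl⟩ :=
    natDegree_eq_zero.mp (natDegree_eq_zero_of_X_mul_derivative_eq ha (by omega) hpoly)
  exact ⟨c, RatFunc.algebraMap_C c⟩

/-- Let `k₀` be a field of characteristic `p > 0`, `k = k₀(t)`, `a ∈ k₀` nonzero and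
`m ≥ 1` with `p ^ m > 2`.  If `x ∈ k` satisfies `t * (dx/dt) = x - a * x ^ p ^ m`,
where `d/dt` is the unique derivation of `k₀(t)` over `k₀` with `dt/dt = 1`,
then `x` is a constant, i.e. `x ∈ k₀`. -/
theorem t_mul_derivative_eq_imp_constant
    (p : ℕ) (k₀ : Type) [Field k₀] [CharP k₀ p] (hp : 0 < p)
    (a : k₀) (ha : a ≠ 0) (m : ℕ) (hm : 1 ≤ m) (hpm : 2 < p ^ m)
    (D : Derivation k₀ (RatFunc k₀) (RatFunc k₀)) (hD : D RatFunc.X = 1)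
    (x : RatFunc k₀) (heq : RatFunc.X * D x = x - RatFunc.C a * x ^ p ^ m) :
    ∃ c : k₀, x = RatFunc.C c :=
  t_mul_derivative_eq_imp_constant_general p k₀ a ha m hpm D hD x heq
end

section
/- Let p > 2 be a prime, k₀ a field of characteristic p, k = k₀(t), and 1 ≤ m ≤ n integers. Let G₂ = {(x, y) : x = −t·x^{p^{2m}} + y^{p^n}} and define h((x,y),(x',y')) := (x^{p^m}x' − x(x')^{p^m}, x(y')^{p^{n−m}} − y^{p^{n−m}}x'). Then h is not symmetric: there exist a field extension K/k and elements g, g' ∈ G₂(K) such that h(g, g') ≠ h(g', g). -/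
/-- A bundled field extension of `k`. -/
structure FieldExtension (k : Type) [Field k] where
  /-- the underlying type of the extension field -/
  carrier : Type
  [fieldCarrier : Field carrier]
  [algebraCarrier : Algebra k carrier]

attribute [instance] FieldExtension.fieldCarrier FieldExtension.algebraCarrier

/-- Endo's map
`h((x,y),(x',y')) = (x^(p^m)*x' - x*x'^(p^m), x*y'^(p^(n-m)) - y^(p^(n-m))*x')`. -/
def endoPairing {A : Type} [CommRing A] (p m n : ℕ) (w w' : A × A) : A × A :=
  (w.1 ^ p ^ m * w'.1 - w.1 * w'.1 ^ p ^ m,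
   w.1 * w'.2 ^ p ^ (n - m) - w.2 ^ p ^ (n - m) * w'.1)

/-!
Take `K` algebraically closed, so that every `x ∈ K` is the first coordinate of a point of `G₂(K)`.
The first coordinate of `h` is alternating, so symmetry of `h` would force `2 · h(g, g')₁ = 0`.
For `g = (t, _)` and `g' = (1, _)` this is `2 (t^(p^m) - t)`, which is nonzero because `p ≠ 2`
and `t` is transcendental over `k₀`.
-/

theorem endoPairing_fst_swap {A : Type} [CommRing A] (p m n : ℕ) (w w' : A × A) :
    (endoPairing p m n w' w).1 = -(endoPairing p m n w w').1 := by
  simp only [endoPairing]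
  ring

theorem endoPairing_fst_one_right {A : Type} [CommRing A] (p m n : ℕ) (x y y' : A) :
    (endoPairing p m n (x, y) (1, y')).1 = x ^ p ^ m - x := by
  simp [endoPairing]

theorem endoPairing_ne_swap_of_fst_ne_zero {A : Type} [CommRing A] [NoZeroDivisors A]
    (h2 : (2 : A) ≠ 0) {p m n : ℕ} {w w' : A × A} (hw : (endoPairing p m n w w').1 ≠ 0) :
    endoPairing p m n w w' ≠ endoPairing p m n w' w := by
  intro h
  have hfst := congrArg Prod.fst h
  rw [endoPairing_fst_swap p m n w w', eq_neg_iff_add_eq_zero, ← two_mul] at hfst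
  exact hw ((mul_eq_zero.mp hfst).resolve_left h2)

theorem two_ne_zero_of_two_lt_charP {R : Type} [AddMonoidWithOne R] {p : ℕ} [CharP R p]
    (hp : 2 < p) : (2 : R) ≠ 0 := by
  rw [← Nat.cast_ofNat, Ne, CharP.cast_eq_zero_iff R p]
  exact fun hdvd => absurd (Nat.le_of_dvd two_pos hdvd) (not_le.mpr hp)

theorem Transcendental.pow_ne_self {R A : Type} [CommRing R] [Nontrivial R] [CommRing A]
    [Algebra R A] {x : A} (hx : Transcendental R x) {q : ℕ} (hq : 2 ≤ q) : x ^ q ≠ x := by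
  intro h
  refine hx ⟨Polynomial.X ^ q - Polynomial.X, ?_, by simp [h]⟩
  refine Polynomial.ne_zero_of_natDegree_gt (n := 1) ?_
  rw [Polynomial.natDegree_sub_eq_left_of_natDegree_lt] <;> simp <;> omega

theorem IsAlgClosed.exists_eq_add_pow {K : Type} [Field K] [IsAlgClosed K] (a x : K) {N : ℕ}
    (hN : 0 < N) : ∃ y : K, x = a + y ^ N := by
  obtain ⟨y, hy⟩ := IsAlgClosed.exists_pow_nat_eq (x - a) hN
  exact ⟨y, by rw [hy]; ring⟩

theorem endo_map_not_symmetric_general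
    (p : ℕ) (hp2 : 2 < p)
    (k₀ : Type) [Field k₀] [CharP k₀ p]
    (m n : ℕ) (hm : 1 ≤ m) :
    ∃ (K : FieldExtension (RatFunc k₀)) (g g' : K.carrier × K.carrier),
      (g.1 = -(algebraMap (RatFunc k₀) K.carrier RatFunc.X) * g.1 ^ p ^ (2 * m)
        + g.2 ^ p ^ n) ∧
      (g'.1 = -(algebraMap (RatFunc k₀) K.carrier RatFunc.X) * g'.1 ^ p ^ (2 * m)
        + g'.2 ^ p ^ n) ∧
      endoPairing p m n g g' ≠ endoPairing p m n g' g := by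
  let L := AlgebraicClosure (RatFunc k₀)
  have : CharP L p := charP_of_injective_algebraMap' k₀ p
  set t : L := algebraMap (RatFunc k₀) L RatFunc.X
  have hpn : 0 < p ^ n := by positivity
  obtain ⟨y, hy⟩ := IsAlgClosed.exists_eq_add_pow (-t * t ^ p ^ (2 * m)) t hpn
  obtain ⟨y', hy'⟩ := IsAlgClosed.exists_eq_add_pow (-t * 1 ^ p ^ (2 * m)) 1 hpn
  refine ⟨⟨L⟩, (t, y), (1, y'), hy, hy', ?_⟩
  refine endoPairing_ne_swap_of_fst_ne_zero (two_ne_zero_of_two_lt_charP hp2) ?_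
  rw [endoPairing_fst_one_right, sub_ne_zero, ← map_pow]
  refine fun h => (RatFunc.transcendental_X (K := k₀)).pow_ne_self ?_ (RingHom.injective _ h)
  calc 2 ≤ p := hp2.le
    _ ≤ p ^ m := Nat.le_self_pow (by omega) p

/-- **Endo's map is not symmetric for `p > 2`.**
Let `p > 2` be a prime, `k₀` a field of characteristic `p`, `k = k₀(t)` and
`1 ≤ m ≤ n`.  Then there exist a field extension `K/k` and points `g, g'` of
`G₂(K) = {(x,y) ∈ K² | x = -t*x^(p^(2m)) + y^(p^n)}` with `h(g, g') ≠ h(g', g)`,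
where `h((x,y),(x',y')) = (x^(p^m)*x' - x*x'^(p^m), x*y'^(p^(n-m)) - y^(p^(n-m))*x')`. -/
theorem endo_map_not_symmetric
    (p : ℕ) (hp : p.Prime) (hp2 : 2 < p)
    (k₀ : Type) [Field k₀] [CharP k₀ p]
    (m n : ℕ) (hm : 1 ≤ m) (hmn : m ≤ n) :
    ∃ (K : FieldExtension (RatFunc k₀)) (g g' : K.carrier × K.carrier),
      (g.1 = -(algebraMap (RatFunc k₀) K.carrier RatFunc.X) * g.1 ^ p ^ (2 * m)
        + g.2 ^ p ^ n) ∧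
      (g'.1 = -(algebraMap (RatFunc k₀) K.carrier RatFunc.X) * g'.1 ^ p ^ (2 * m)
        + g'.2 ^ p ^ n) ∧
      endoPairing p m n g g' ≠ endoPairing p m n g' g :=
  endo_map_not_symmetric_general p hp2 k₀ m n hm
end

section
/- Let p = 2, k₀ a field of characteristic 2, and k = k₀(t). Let G₁ = {X = −X² − tY²} ⊂ G_a² and G₂ = {X = X⁴ + tY⁴} ⊂ G_a² (Gabber's groups for p = 2). Then G₁ is a conic in A²_k with a k-rational point, hence birational to P¹_k, and G₁(k)/R is trivial. Consequently, for every central extension G of G₂ by G₁ constructed from a bi-additive map h : G₂ × G₂ → G₁ (so that G = G₁ × G₂ as a k-variety with multiplication twisted by h), one has G(K)/R = G₁(K)/R × G₂(K)/R = G₂(K)/R for every field extension K/k, and in particular G(K)/R is commutative for every extension K/k. -/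
/-!
The conic `G₁ : x = -x² - t y²` has the rational point `(0, 0)`, and the lines `y = s x` through
it parametrize it: `x = -1 / (1 + t s²)`, `y = s x`. This identifies its function field with
`k(s)`. Injectivity of `k[x, y] / (F) → k(s)` reduces, modulo `F` (monic in `x`), to showing that
`a(y) + b(y) x = 0` forces `a = b = 0`; eliminating `x` gives `a² - a b + t Y² b² = 0` in `k[Y]`
(as `y` is transcendental), whose leading coefficients would make `-t` a square.

Over any `K / k`, turning the line through `(0, 0)` from the vertical one to the one through a
point `P` traces a rational curve on `G₁` from `(0, 0)` to `P`, so `G₁(K)/R` is trivial. A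
rational curve on `G = G₁ × G₂` is a pair of rational curves, so
`G(K)/R = G₁(K)/R × G₂(K)/R = G₂(K)/R`, and `w w'`, `w' w` differ only in their
`G₁`-coordinate.
-/


noncomputable section

/-- Points `(x, y)` of Gabber's conic `G₁ = {X = -X² - tY²}`, relative to a chosen
image `τ` of the parameter `t`. -/
def conicSol {R : Type} [CommRing R] (τ : R) (v : R × R) : Prop :=
  v.1 = -v.1 ^ 2 - τ * v.2 ^ 2

/-- Points `(x, y)` of Gabber's curve `G₂ = {X = X⁴ + tY⁴}`, relative to a chosen
image `τ` of the parameter `t`. -/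
def quarticSol {R : Type} [CommRing R] (τ : R) (v : R × R) : Prop :=
  v.1 = v.1 ^ 4 + τ * v.2 ^ 4

/-- Points of `G = G₁ × G₂`. -/
def gSol {R : Type} [CommRing R] (τ : R) (w : (R × R) × (R × R)) : Prop :=
  conicSol τ w.1 ∧ quarticSol τ w.2

/-- The twisted multiplication of `G = G₁ × G₂` attached to `h`. -/
def gMul {K : Type} [Field K] (h : (K × K) → (K × K) → (K × K))
    (w w' : (K × K) × (K × K)) : (K × K) × (K × K) :=
  (w.1 + w'.1 + h w.2 w'.2, w.2 + w'.2)

/-- The inclusion `K → (K[T])_f` of constants into the coordinate ring of the basic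
open set `{f ≠ 0} ⊆ 𝔸¹_K ⊆ ℙ¹_K`. -/
def awayConst (K : Type) [Field K] (f : Polynomial K) : K →+* Localization.Away f :=
  (algebraMap (Polynomial K) (Localization.Away f)).comp Polynomial.C

/-- Evaluation `(K[T])_f → K` at a point `c ∈ K` with `f(c) ≠ 0`. -/
def awayEval (K : Type) [Field K] (f : Polynomial K) (c : K) (hc : f.eval c ≠ 0) :
    Localization.Away f →+* K :=
  Localization.awayLift (Polynomial.evalRingHom c) f
    (by simpa using isUnit_iff_ne_zero.mpr hc)

section RLink

variable (k₀ : Type) [Field k₀] (K : Type) [Field K] [Algebra (RatFunc k₀) K]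

/-- Two `K`-points of `G₁` are directly R-linked: there is a `K`-rational map
`ℙ¹_K ⇢ (G₁)_K` (concretely, a pair of rational functions regular on a basic open set
`{f ≠ 0}` with `f(0) ≠ 0 ≠ f(1)`, satisfying the equation of `G₁`) defined at `0` and
`1` and sending `0`, `1` to the two points. -/
def RLinkedConic (P Q : K × K) : Prop :=
  ∃ (f : Polynomial K) (h0 : f.eval 0 ≠ 0) (h1 : f.eval 1 ≠ 0)
    (v : Localization.Away f × Localization.Away f),
    conicSol (awayConst K f (algebraMap (RatFunc k₀) K RatFunc.X)) v ∧
    (awayEval K f 0 h0 v.1, awayEval K f 0 h0 v.2) = P ∧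
    (awayEval K f 1 h1 v.1, awayEval K f 1 h1 v.2) = Q

/-- R-equivalence on `G₁(K)`. -/
def REquivConic : K × K → K × K → Prop :=
  Relation.EqvGen (RLinkedConic k₀ K)

/-- Two `K`-points of `G₂` are directly R-linked. -/
def RLinkedQuartic (P Q : K × K) : Prop :=
  ∃ (f : Polynomial K) (h0 : f.eval 0 ≠ 0) (h1 : f.eval 1 ≠ 0)
    (v : Localization.Away f × Localization.Away f),
    quarticSol (awayConst K f (algebraMap (RatFunc k₀) K RatFunc.X)) v ∧
    (awayEval K f 0 h0 v.1, awayEval K f 0 h0 v.2) = P ∧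
    (awayEval K f 1 h1 v.1, awayEval K f 1 h1 v.2) = Q

/-- R-equivalence on `G₂(K)`. -/
def REquivQuartic : K × K → K × K → Prop :=
  Relation.EqvGen (RLinkedQuartic k₀ K)

/-- Two `K`-points of `G = G₁ × G₂` are directly R-linked. -/
def RLinkedG (P Q : (K × K) × (K × K)) : Prop :=
  ∃ (f : Polynomial K) (h0 : f.eval 0 ≠ 0) (h1 : f.eval 1 ≠ 0)
    (w : (Localization.Away f × Localization.Away f) ×
      (Localization.Away f × Localization.Away f)),
    gSol (awayConst K f (algebraMap (RatFunc k₀) K RatFunc.X)) w ∧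
    ((awayEval K f 0 h0 w.1.1, awayEval K f 0 h0 w.1.2),
      (awayEval K f 0 h0 w.2.1, awayEval K f 0 h0 w.2.2)) = P ∧
    ((awayEval K f 1 h1 w.1.1, awayEval K f 1 h1 w.1.2),
      (awayEval K f 1 h1 w.2.1, awayEval K f 1 h1 w.2.2)) = Q

/-- R-equivalence on `G(K)`. -/
def REquivG : (K × K) × (K × K) → (K × K) × (K × K) → Prop :=
  Relation.EqvGen (RLinkedG k₀ K)

end RLink

open Polynomial

section FunctionField

variable {k : Type} [Field k]

def conicPoly (t : k) : MvPolynomial (Fin 2) k :=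
  .X 0 - (-MvPolynomial.X 0 ^ 2 - .C t * .X 1 ^ 2)

lemma totalDegree_conicPoly (t : k) : (conicPoly t).totalDegree = 2 := by
  have hform : conicPoly t = (.X 0 ^ 2 + .C t * .X 1 ^ 2) + .X 0 := by rw [conicPoly]; ring
  have hhom : (MvPolynomial.X 0 ^ 2 + .C t * .X 1 ^ 2 : MvPolynomial (Fin 2) k).IsHomogeneous 2 :=
    (MvPolynomial.isHomogeneous_X_pow _ _).add ((MvPolynomial.isHomogeneous_X_pow _ _).C_mul t)
  have hne : (MvPolynomial.X 0 ^ 2 + .C t * .X 1 ^ 2 : MvPolynomial (Fin 2) k) ≠ 0 := fun h => by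
    simpa using congrArg (MvPolynomial.eval ![1, 0]) h
  rw [hform, MvPolynomial.totalDegree_add_eq_left_of_totalDegree_lt, hhom.totalDegree hne]
  rw [hhom.totalDegree hne, MvPolynomial.totalDegree_X]
  norm_num

theorem exists_sub_mem_span_conicPoly (t : k) (g : MvPolynomial (Fin 2) k) :
    ∃ a b : k[X], g - (aeval (MvPolynomial.X 1) a + aeval (MvPolynomial.X 1) b * .X 0) ∈
      Ideal.span {conicPoly t} := by
  induction g using MvPolynomial.induction_on with
  | C c => exact ⟨C c, 0, by simp [MvPolynomial.algebraMap_eq]⟩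
  | add g g' hg hg' =>
    obtain ⟨a, b, h⟩ := hg
    obtain ⟨a', b', h'⟩ := hg'
    refine ⟨a + a', b + b', ?_⟩
    convert add_mem h h' using 1
    simp only [map_add]
    ring
  | mul_X g i hg =>
    obtain ⟨a, b, h⟩ := hg
    match i with
    | 0 =>
      -- `x² ≡ -x - t y²` modulo the equation of the conic
      refine ⟨-C t * X ^ 2 * b, a - b, ?_⟩
      convert add_mem (Ideal.mul_mem_right (MvPolynomial.X 0) _ h)
        (Ideal.mul_mem_left _ (aeval (MvPolynomial.X 1) b)
          (Ideal.mem_span_singleton_self (conicPoly t))) using 1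
      simp only [conicPoly, map_sub, map_mul, map_neg, map_pow, aeval_C, aeval_X,
        MvPolynomial.algebraMap_eq]
      ring
    | 1 =>
      refine ⟨X * a, X * b, ?_⟩
      convert Ideal.mul_mem_right (MvPolynomial.X 1) _ h using 1
      simp only [map_mul, aeval_X]
      ring

theorem eq_zero_of_sq_sub_mul_add_eq_zero {t : k} (ht : ¬IsSquare (-t)) {a b : k[X]}
    (h : a ^ 2 - a * b + C t * X ^ 2 * b ^ 2 = 0) : b = 0 := by
  by_contra hb
  have ht₀ : t ≠ 0 := by
    rintro rfl
    exact ht ⟨0, by simp⟩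
  have hab : a * (a - b) = C (-t) * X ^ 2 * b ^ 2 := by
    rw [C_neg]
    linear_combination h
  rcases le_or_gt a.natDegree b.natDegree with hle | hlt
  · have hdeg : (C (-t) * X ^ 2 * b ^ 2).natDegree = 2 + 2 * b.natDegree := by
      rw [natDegree_mul (by simp [ht₀]) (pow_ne_zero _ hb),
        natDegree_C_mul_X_pow _ _ (neg_ne_zero.mpr ht₀), natDegree_pow]
    have hle' : (a * (a - b)).natDegree ≤ 2 * b.natDegree :=
      natDegree_mul_le.trans (by have := natDegree_sub_le a b; omega)
    rw [hab, hdeg] at hle'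
    omega
  · have hlc := congrArg leadingCoeff hab
    rw [leadingCoeff_mul, leadingCoeff_sub_of_degree_lt (degree_lt_degree hlt), leadingCoeff_mul,
      leadingCoeff_mul, leadingCoeff_C, leadingCoeff_X_pow, leadingCoeff_pow] at hlc
    have hβ : b.leadingCoeff ≠ 0 := leadingCoeff_ne_zero.mpr hb
    exact ht ⟨a.leadingCoeff / b.leadingCoeff, by field_simp; linear_combination -hlc⟩

theorem eq_zero_of_aeval_add_aeval_mul_eq_zero {L : Type} [CommRing L] [Algebra k L] {t : k}
    (ht : ¬IsSquare (-t)) {x y : L} (hy : Transcendental k y)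
    (hxy : conicSol (algebraMap k L t) (x, y)) {a b : k[X]}
    (h : aeval y a + aeval y b * x = 0) : a = 0 ∧ b = 0 := by
  simp only [conicSol] at hxy
  have hsq : aeval y (a ^ 2 - a * b + C t * X ^ 2 * b ^ 2) = 0 := by
    simp only [map_add, map_sub, map_mul, map_pow, aeval_C, aeval_X]
    linear_combination (aeval y a - aeval y b * x - aeval y b) * h + aeval y b ^ 2 * hxy
  obtain rfl := eq_zero_of_sq_sub_mul_add_eq_zero ht (transcendental_iff.mp hy _ hsq)
  simp only [map_zero, zero_mul, add_zero] at h
  exact ⟨transcendental_iff.mp hy _ h, rfl⟩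

theorem ker_aeval_eq_span_conicPoly {L : Type} [CommRing L] [Algebra k L] {t : k}
    (ht : ¬IsSquare (-t)) {x y : L} (hy : Transcendental k y)
    (hxy : conicSol (algebraMap k L t) (x, y)) :
    RingHom.ker (MvPolynomial.aeval ![x, y] : MvPolynomial (Fin 2) k →ₐ[k] L) =
      Ideal.span {conicPoly t} := by
  set φ : MvPolynomial (Fin 2) k →ₐ[k] L := MvPolynomial.aeval ![x, y]
  have hF : Ideal.span {conicPoly t} ≤ RingHom.ker φ := by
    rw [Ideal.span_singleton_le_iff_mem, RingHom.mem_ker, conicPoly, map_sub, sub_eq_zero]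
    simpa [φ, conicSol] using hxy
  refine le_antisymm (fun g hg => ?_) hF
  obtain ⟨a, b, hab⟩ := exists_sub_mem_span_conicPoly t g
  have hφ : aeval y a + aeval y b * x = 0 := by
    have := hF hab
    rw [RingHom.mem_ker, map_sub, RingHom.mem_ker.mp hg, zero_sub, neg_eq_zero] at this
    simpa [φ, ← aeval_algHom_apply] using this
  obtain ⟨rfl, rfl⟩ := eq_zero_of_aeval_add_aeval_mul_eq_zero ht hy hxy hφ
  simpa using hab

theorem RatFunc.surjective_of_apply_eq_X {F : Type} [Field F] [Algebra k F]
    (ψ : F →ₐ[k] RatFunc k) {w : F} (hw : ψ w = RatFunc.X) : Function.Surjective ψ := by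
  intro z
  refine ⟨aeval w z.num / aeval w z.denom, ?_⟩
  rw [map_div₀, ← aeval_algHom_apply, ← aeval_algHom_apply, hw,
    RatFunc.aeval_X_left_eq_algebraMap, RatFunc.aeval_X_left_eq_algebraMap, RatFunc.num_div_denom]

/-- The second intersection of the conic with the line `y = X x` through `(0, 0)`. -/
def genericConicPoint (t : k) : RatFunc k × RatFunc k :=
  (-(1 + RatFunc.C t * RatFunc.X ^ 2)⁻¹, RatFunc.X * -(1 + RatFunc.C t * RatFunc.X ^ 2)⁻¹)

lemma one_add_C_mul_X_sq_ne_zero (t : k) : (1 + RatFunc.C t * RatFunc.X ^ 2 : RatFunc k) ≠ 0 := by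
  have h : (1 + RatFunc.C t * RatFunc.X ^ 2 : RatFunc k) =
      algebraMap k[X] (RatFunc k) (1 + C t * X ^ 2) := by
    simp [RatFunc.algebraMap_C, RatFunc.algebraMap_X]
  rw [h]
  refine RatFunc.algebraMap_ne_zero fun h0 => ?_
  simpa using congrArg (coeff · 0) h0

lemma conicSol_genericConicPoint (t : k) :
    conicSol (algebraMap k (RatFunc k) t) (genericConicPoint t) := by
  have hD := one_add_C_mul_X_sq_ne_zero t
  simp only [conicSol, genericConicPoint, RatFunc.algebraMap_eq_C]
  field_simp
  ring

lemma transcendental_genericConicPoint_snd (t : k) :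
    Transcendental k (genericConicPoint t).2 := by
  refine RatFunc.transcendental_of_ne_C _ fun ⟨c, hc⟩ => ?_
  have hD := one_add_C_mul_X_sq_ne_zero t
  have h : algebraMap k[X] (RatFunc k) (-X) =
      algebraMap k[X] (RatFunc k) (C c * (1 + C t * X ^ 2)) := by
    simp only [genericConicPoint] at hc
    simp only [map_neg, map_mul, map_add, map_one, map_pow, RatFunc.algebraMap_C,
      RatFunc.algebraMap_X, ← hc]
    rw [mul_neg, neg_mul, inv_mul_cancel_right₀ hD]
  simpa [coeff_one] using congrArg (coeff · 1) (RatFunc.algebraMap_injective k h)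

lemma genericConicPoint_snd_div_fst (t : k) :
    (genericConicPoint t).2 / (genericConicPoint t).1 = RatFunc.X :=
  mul_div_cancel_right₀ _ (neg_ne_zero.mpr (inv_ne_zero (one_add_C_mul_X_sq_ne_zero t)))

theorem nonempty_algEquiv_fractionRing_conic {t : k} (ht : ¬IsSquare (-t)) :
    Nonempty (FractionRing (MvPolynomial (Fin 2) k ⧸ Ideal.span {conicPoly t}) ≃ₐ[k]
      RatFunc k) := by
  set P := genericConicPoint t
  let φ : MvPolynomial (Fin 2) k →ₐ[k] RatFunc k := MvPolynomial.aeval ![P.1, P.2]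
  have hker : Ideal.span {conicPoly t} = RingHom.ker φ :=
    (ker_aeval_eq_span_conicPoly ht (transcendental_genericConicPoint_snd t)
      (conicSol_genericConicPoint t)).symm
  let ι := (Ideal.kerLiftAlg φ).comp (Ideal.quotientEquivAlgOfEq k hker).toAlgHom
  have hι : Function.Injective ι :=
    (Ideal.kerLiftAlg_injective φ).comp (Ideal.quotientEquivAlgOfEq k hker).injective
  have : IsDomain (MvPolynomial (Fin 2) k ⧸ Ideal.span {conicPoly t}) := hι.isDomain ι
  let ψ := IsFractionRing.liftAlgHom
    (K := FractionRing (MvPolynomial (Fin 2) k ⧸ Ideal.span {conicPoly t})) hι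
  have hψ (g : MvPolynomial (Fin 2) k) :
      ψ (algebraMap _ _ (Ideal.Quotient.mk (Ideal.span {conicPoly t}) g)) = φ g := by
    simp [ψ, ι, IsFractionRing.liftAlgHom_apply, IsFractionRing.lift_algebraMap]
  have hX : ψ (algebraMap _ _ (Ideal.Quotient.mk (Ideal.span {conicPoly t}) (.X 1)) /
      algebraMap _ _ (Ideal.Quotient.mk (Ideal.span {conicPoly t}) (.X 0))) = RatFunc.X := by
    rw [map_div₀, hψ, hψ]
    simpa [φ] using genericConicPoint_snd_div_fst t
  exact ⟨.ofBijective ψ ⟨ψ.toRingHom.injective, RatFunc.surjective_of_apply_eq_X ψ hX⟩⟩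

lemma RatFunc.not_isSquare_neg_X : ¬IsSquare (-RatFunc.X : RatFunc k) := by
  rintro ⟨s, hs⟩
  have hs₀ : s ≠ 0 := by
    rintro rfl
    exact RatFunc.X_ne_zero (neg_eq_zero.mp (by simpa using hs))
  have h := congrArg RatFunc.intDegree hs
  rw [RatFunc.intDegree_neg, RatFunc.intDegree_X, RatFunc.intDegree_mul hs₀ hs₀] at h
  omega

end FunctionField

theorem Relation.EqvGen.map {α β : Type*} {r : α → α → Prop} {s : β → β → Prop}
    (f : α → β) (hf : ∀ a b, r a b → s (f a) (f b)) {a b : α} (h : Relation.EqvGen r a b) :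
    Relation.EqvGen s (f a) (f b) := by
  induction h with
  | rel x y hxy => exact .rel _ _ (hf x y hxy)
  | refl x => exact .refl _
  | symm x y _ ih => exact .symm _ _ ih
  | trans x y z _ _ ih₁ ih₂ => exact .trans _ _ _ ih₁ ih₂

section Equations

variable {R S : Type} [CommRing R] [CommRing S]

lemma conicSol.map (f : R →+* S) {τ : R} {v : R × R} (h : conicSol τ v) :
    conicSol (f τ) (f v.1, f v.2) := by
  simpa [conicSol] using congrArg f h

lemma quarticSol.map (f : R →+* S) {τ : R} {v : R × R} (h : quarticSol τ v) :
    quarticSol (f τ) (f v.1, f v.2) := by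
  simpa [quarticSol] using congrArg f h

variable [CharP R 2]

lemma conicSol.add {τ : R} {v w : R × R} (hv : conicSol τ v) (hw : conicSol τ w) :
    conicSol τ (v + w) := by
  simp only [conicSol, Prod.fst_add, Prod.snd_add, CharTwo.add_sq] at *
  linear_combination hv + hw

lemma quarticSol.add {τ : R} {v w : R × R} (hv : quarticSol τ v) (hw : quarticSol τ w) :
    quarticSol τ (v + w) := by
  have h4 (a b : R) : (a + b) ^ 4 = a ^ 4 + b ^ 4 := by
    rw [show 4 = 2 * 2 by rfl, pow_mul, pow_mul, pow_mul, CharTwo.add_sq, CharTwo.add_sq]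
  simp only [quarticSol, Prod.fst_add, Prod.snd_add, h4] at *
  linear_combination hv + hw

lemma gSol_gMul {K : Type} [Field K] [CharP K 2] {τ : K} {h : K × K → K × K → K × K}
    {w w' : (K × K) × (K × K)} (hw : gSol τ w) (hw' : gSol τ w')
    (hh : conicSol τ (h w.2 w'.2)) : gSol τ (gMul h w w') :=
  ⟨(hw.1.add hw'.1).add hh, hw.2.add hw'.2⟩

end Equations

section Localization

variable {K : Type} [Field K] (f : K[X]) (c : K) (hc : f.eval c ≠ 0)

lemma awayEval_algebraMap (p : K[X]) :
    awayEval K f c hc (algebraMap K[X] (Localization.Away f) p) = p.eval c :=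
  IsLocalization.Away.lift_eq f (isUnit_iff_ne_zero.mpr hc) p

lemma awayEval_awayConst (x : K) : awayEval K f c hc (awayConst K f x) = x := by
  simp [awayConst, awayEval_algebraMap]

lemma awayEval_mul_invSelf (p : K[X]) :
    awayEval K f c hc (algebraMap K[X] _ p * IsLocalization.Away.invSelf f) =
      p.eval c / f.eval c := by
  have h := congrArg (awayEval K f c hc)
    (IsLocalization.Away.mul_invSelf (S := Localization.Away f) f)
  rw [map_mul, map_one, awayEval_algebraMap] at h
  rw [map_mul, awayEval_algebraMap, div_eq_mul_inv, eq_inv_of_mul_eq_one_right h]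

end Localization

section REquivalence

variable (k₀ : Type) [Field k₀] (K : Type) [Field K] [Algebra (RatFunc k₀) K]

local notation "τ" => algebraMap (RatFunc k₀) K RatFunc.X

lemma algebraMap_X_ne_zero : τ ≠ 0 :=
  (_root_.map_ne_zero _).mpr RatFunc.X_ne_zero

lemma rLinkedConic_of_polynomial {p q f : K[X]} (h0 : f.eval 0 ≠ 0) (h1 : f.eval 1 ≠ 0)
    (hpqf : p * f = -p ^ 2 - C τ * q ^ 2) :
    RLinkedConic k₀ K (p.eval 0 / f.eval 0, q.eval 0 / f.eval 0)
      (p.eval 1 / f.eval 1, q.eval 1 / f.eval 1) := by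
  set ι := algebraMap K[X] (Localization.Away f)
  set u := IsLocalization.Away.invSelf (S := Localization.Away f) f
  have hu : ι f * u = 1 := IsLocalization.Away.mul_invSelf f
  refine ⟨f, h0, h1, (ι p * u, ι q * u), ?_, ?_, ?_⟩
  · have h := congrArg ι hpqf
    simp only [map_mul, map_sub, map_neg, map_pow] at h
    simp only [conicSol, show awayConst K f τ = ι (C τ) from rfl]
    linear_combination u ^ 2 * h - ι p * u * hu
  all_goals simp only [awayEval_mul_invSelf, ι, u]

lemma rLinkedConic_zero_of_fst_ne_zero {P : K × K} (hP : conicSol τ P) (hP₁ : P.1 ≠ 0) :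
    RLinkedConic k₀ K (0, 0) P := by
  -- The second intersection of the conic with the line through `(0, 0)` in direction
  -- `(a, b)`, which turns from the vertical line at `T = 0` to the line through `P` at `T = 1`.
  set a : K[X] := C P.1 * X
  set b : K[X] := C (P.2 - 1) * X + 1
  have hf₀ : (a ^ 2 + C τ * b ^ 2).eval 0 = τ := by simp [a, b]
  have hf₁ : (a ^ 2 + C τ * b ^ 2).eval 1 = -P.1 := by
    simp only [conicSol] at hP
    simp [a, b]
    linear_combination hP
  have key := rLinkedConic_of_polynomial k₀ K (p := -a ^ 2) (q := -(a * b))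
    (hf₀ ▸ algebraMap_X_ne_zero k₀ K) (hf₁ ▸ neg_ne_zero.mpr hP₁) (by ring)
  rw [hf₀, hf₁] at key
  convert key using 1
  · simp [a, b]
  · ext
    · field_simp
      simp [a]
    · field_simp
      simp [a, b]
      ring

lemma rEquivConic_zero {P : K × K} (hP : conicSol τ P) : REquivConic k₀ K (0, 0) P := by
  by_cases hP₁ : P.1 = 0
  · have hP₂ : P.2 = 0 := by
      simp only [conicSol, hP₁] at hP
      have : τ * P.2 ^ 2 = 0 := by linear_combination hP
      simpa [algebraMap_X_ne_zero k₀ K] using this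
    rw [show P = (0, 0) from Prod.ext hP₁ hP₂]
    exact .refl _
  · exact .rel _ _ (rLinkedConic_zero_of_fst_ne_zero k₀ K hP hP₁)

theorem rEquivConic_of_conicSol {P Q : K × K} (hP : conicSol τ P) (hQ : conicSol τ Q) :
    REquivConic k₀ K P Q :=
  .trans _ _ _ (.symm _ _ (rEquivConic_zero k₀ K hP)) (rEquivConic_zero k₀ K hQ)

variable {k₀ K}

lemma RLinkedG.fst {w w' : (K × K) × (K × K)} (h : RLinkedG k₀ K w w') :
    RLinkedConic k₀ K w.1 w'.1 :=
  let ⟨f, h0, h1, v, hv, hv0, hv1⟩ := h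
  ⟨f, h0, h1, v.1, hv.1, congrArg Prod.fst hv0, congrArg Prod.fst hv1⟩

lemma RLinkedG.snd {w w' : (K × K) × (K × K)} (h : RLinkedG k₀ K w w') :
    RLinkedQuartic k₀ K w.2 w'.2 :=
  let ⟨f, h0, h1, v, hv, hv0, hv1⟩ := h
  ⟨f, h0, h1, v.2, hv.2, congrArg Prod.snd hv0, congrArg Prod.snd hv1⟩

lemma rLinkedG_mk_of_rLinkedConic {P P' Q : K × K} (hQ : quarticSol τ Q)
    (h : RLinkedConic k₀ K P P') : RLinkedG k₀ K (P, Q) (P', Q) :=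
  let ⟨f, h0, h1, v, hv, hv0, hv1⟩ := h
  ⟨f, h0, h1, (v, (awayConst K f Q.1, awayConst K f Q.2)), ⟨hv, hQ.map _⟩,
    by simp [awayEval_awayConst, hv0], by simp [awayEval_awayConst, hv1]⟩

lemma rLinkedG_mk_of_rLinkedQuartic {P Q Q' : K × K} (hP : conicSol τ P)
    (h : RLinkedQuartic k₀ K Q Q') : RLinkedG k₀ K (P, Q) (P, Q') :=
  let ⟨f, h0, h1, v, hv, hv0, hv1⟩ := h
  ⟨f, h0, h1, ((awayConst K f P.1, awayConst K f P.2), v), ⟨hP.map _, hv⟩,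
    by simp [awayEval_awayConst, hv0], by simp [awayEval_awayConst, hv1]⟩

theorem rEquivG_iff {w w' : (K × K) × (K × K)} (hw : quarticSol τ w.2)
    (hw' : conicSol τ w'.1) :
    REquivG k₀ K w w' ↔ REquivConic k₀ K w.1 w'.1 ∧ REquivQuartic k₀ K w.2 w'.2 :=
  ⟨fun h => ⟨h.map Prod.fst fun _ _ => RLinkedG.fst, h.map Prod.snd fun _ _ => RLinkedG.snd⟩,
    fun ⟨h₁, h₂⟩ => .trans _ (w'.1, w.2) _
      (h₁.map (·, w.2) fun _ _ => rLinkedG_mk_of_rLinkedConic hw)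
      (h₂.map (w'.1, ·) fun _ _ => rLinkedG_mk_of_rLinkedQuartic hw')⟩

theorem rEquivG_iff_rEquivQuartic {w w' : (K × K) × (K × K)} (hw : gSol τ w)
    (hw' : gSol τ w') : REquivG k₀ K w w' ↔ REquivQuartic k₀ K w.2 w'.2 := by
  rw [rEquivG_iff hw.2 hw'.1, and_iff_right (rEquivConic_of_conicSol k₀ K hw.1 hw'.1)]

theorem rEquivG_gMul_comm [CharP K 2] {h : K × K → K × K → K × K}
    (hh : ∀ v v', quarticSol τ v → quarticSol τ v' → conicSol τ (h v v'))
    {w w' : (K × K) × (K × K)} (hw : gSol τ w) (hw' : gSol τ w') :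
    REquivG k₀ K (gMul h w w') (gMul h w' w) := by
  rw [rEquivG_iff_rEquivQuartic (gSol_gMul hw hw' (hh _ _ hw.2 hw'.2))
    (gSol_gMul hw' hw (hh _ _ hw'.2 hw.2)), gMul, gMul, add_comm w.2]
  exact .refl _

end REquivalence

/-- **Remark 4 of the paper (Gabber's groups in characteristic 2).**
Let `k₀` be a field of characteristic `2` and `k = k₀(t)`.  Let
`G₁ = {X = -X² - tY²} ⊆ 𝔸²_k` and `G₂ = {X = X⁴ + tY⁴} ⊆ 𝔸²_k`.  Then `G₁` is a conic
in `𝔸²_k` with a `k`-rational point, hence birational to `ℙ¹_k` (its function field is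
`k`-isomorphic to `k(T)`), and `G₁(K)/R` is trivial for every field extension `K/k`.
Consequently, for every central extension `G` of `G₂` by `G₁` constructed from a
bi-additive morphism `h : G₂ × G₂ → G₁` (so `G = G₁ × G₂` as a `k`-variety, with
multiplication twisted by `h`), one has `G(K)/R = G₁(K)/R × G₂(K)/R = G₂(K)/R` for
every field extension `K/k`; in particular `G(K)/R` is commutative for every `K/k`. -/
theorem gabber_char_two_extension_has_commutative_R_equivalence_groups
    (k₀ : Type) [Field k₀] [CharP k₀ 2] :
    -- `G₁` is a conic: its equation has total degree `2` ...
    ((MvPolynomial.X 0 - (-(MvPolynomial.X 0) ^ 2 - MvPolynomial.C RatFunc.X * (MvPolynomial.X 1) ^ 2) :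
        MvPolynomial (Fin 2) (RatFunc k₀)).totalDegree = 2) ∧
    -- ... with a `k`-rational point ...
    (∃ P : RatFunc k₀ × RatFunc k₀, conicSol (RatFunc.X : RatFunc k₀) P) ∧
    -- ... hence `G₁` is birational to `ℙ¹_k`: its function field is `k(T)`
    Nonempty
      ((FractionRing (MvPolynomial (Fin 2) (RatFunc k₀) ⧸
          Ideal.span {(MvPolynomial.X 0 - (-(MvPolynomial.X 0) ^ 2 - MvPolynomial.C RatFunc.X * (MvPolynomial.X 1) ^ 2) :
            MvPolynomial (Fin 2) (RatFunc k₀))})) ≃ₐ[RatFunc k₀] RatFunc (RatFunc k₀)) ∧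
    -- `G₁(K)/R` is trivial for every field extension `K/k`
    (∀ (K : Type) [Field K] [Algebra (RatFunc k₀) K],
      ∀ P Q : K × K, conicSol (algebraMap (RatFunc k₀) K RatFunc.X) P →
        conicSol (algebraMap (RatFunc k₀) K RatFunc.X) Q → REquivConic k₀ K P Q) ∧
    -- consequences for every central extension `G` of `G₂` by `G₁` built from a
    -- bi-additive morphism `h : G₂ × G₂ → G₁`
    (∀ h : ∀ (K : Type) [Field K] [Algebra (RatFunc k₀) K], (K × K) → (K × K) → (K × K),
      -- `h` is a morphism of `k`-varieties: it is given by a pair of polynomials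
      (∃ H : MvPolynomial (Fin 4) (RatFunc k₀) × MvPolynomial (Fin 4) (RatFunc k₀),
        ∀ (K : Type) [Field K] [Algebra (RatFunc k₀) K] (w w' : K × K),
          h K w w' = (MvPolynomial.aeval ![w.1, w.2, w'.1, w'.2] H.1,
            MvPolynomial.aeval ![w.1, w.2, w'.1, w'.2] H.2)) →
      -- `h` maps `G₂ × G₂` into `G₁`
      (∀ (K : Type) [Field K] [Algebra (RatFunc k₀) K] (w w' : K × K),
        quarticSol (algebraMap (RatFunc k₀) K RatFunc.X) w →
        quarticSol (algebraMap (RatFunc k₀) K RatFunc.X) w' →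
        conicSol (algebraMap (RatFunc k₀) K RatFunc.X) (h K w w')) →
      -- `h` is bi-additive on points of `G₂`
      (∀ (K : Type) [Field K] [Algebra (RatFunc k₀) K] (w w' w'' : K × K),
        quarticSol (algebraMap (RatFunc k₀) K RatFunc.X) w →
        quarticSol (algebraMap (RatFunc k₀) K RatFunc.X) w' →
        quarticSol (algebraMap (RatFunc k₀) K RatFunc.X) w'' →
        h K (w + w') w'' = h K w w'' + h K w' w'' ∧
        h K w (w' + w'') = h K w w' + h K w w'') →
      ∀ (K : Type) [Field K] [Algebra (RatFunc k₀) K],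
        ∀ w w' : (K × K) × (K × K),
          gSol (algebraMap (RatFunc k₀) K RatFunc.X) w →
          gSol (algebraMap (RatFunc k₀) K RatFunc.X) w' →
          -- `G(K)/R = G₁(K)/R × G₂(K)/R`
          (REquivG k₀ K w w' ↔
            (REquivConic k₀ K w.1 w'.1 ∧ REquivQuartic k₀ K w.2 w'.2)) ∧
          -- `G(K)/R = G₂(K)/R`
          (REquivG k₀ K w w' ↔ REquivQuartic k₀ K w.2 w'.2) ∧
          -- `G(K)/R` is commutative
          REquivG k₀ K (gMul (h K) w w') (gMul (h K) w' w)) := by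
  refine ⟨totalDegree_conicPoly _, ⟨(0, 0), by simp [conicSol]⟩,
    nonempty_algEquiv_fractionRing_conic RatFunc.not_isSquare_neg_X,
    fun K _ _ _ _ => rEquivConic_of_conicSol k₀ K, ?_⟩
  intro h _ hh _ K _ _ w w' hw hw'
  have : CharP K 2 := charP_of_injective_algebraMap (algebraMap (RatFunc k₀) K).injective 2
  exact ⟨rEquivG_iff hw.2 hw'.1, rEquivG_iff_rEquivQuartic hw hw',
    rEquivG_gMul_comm (hh K) hw hw'⟩

end
end
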